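/- arXiv:2502.10136 — 7 statements merged into one kernel-verified Lean document; each statement's English description precedes it below -/
import Mathlib

section
/- If H is a retract of a connected graph G and the cop has a winning strategy in the cop and robber game with radius of capture k on G, then the cop has a winning strategy in the cop and robber game with radius of capture k on H. -/
open SimpleGraph

/-- The cop's sequence of positions, given his initial vertex `c₀` and a
(history-dependent) strategy `F`, where `F n` determines the cop's `(n+1)`-st
position from the robber's positions `r 0, …, r n` seen so far. -/
def copSeq {V : Type*} (c₀ : V) (F : (n : ℕ) → (Fin (n + 1) → V) → V)
    (r : ℕ → V) : ℕ → V
  | 0 => c₀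
  | n + 1 => F n (fun i : Fin (n + 1) => r i)

/-- The cop has a winning strategy in the cop and robber game with radius of
capture `k` on the graph `G`: the cop chooses a starting vertex and a strategy
such that, against every legal play of the robber (at each step the robber
stays or moves to an adjacent vertex; his moves may depend on the whole
history), the cop's play is legal and at some point of the game the distance
between the two players is at most `k`. -/
def CopWinRC {V : Type*} (G : SimpleGraph V) (k : ℕ) : Prop :=
  ∃ (c₀ : V) (F : (n : ℕ) → (Fin (n + 1) → V) → V),
    ∀ r : ℕ → V,
      (∀ i, r (i + 1) = r i ∨ G.Adj (r i) (r (i + 1))) →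
      ((∀ n, copSeq c₀ F r (n + 1) = copSeq c₀ F r n
            ∨ G.Adj (copSeq c₀ F r n) (copSeq c₀ F r (n + 1))) ∧
        ∃ n, G.dist (copSeq c₀ F r n) (r n) ≤ k
           ∨ G.dist (copSeq c₀ F r (n + 1)) (r n) ≤ k)

/-- The radius capture number of `G`: the least `k` such that the cop wins
the cop and robber game with radius of capture `k`. -/
noncomputable def rcNum {V : Type*} (G : SimpleGraph V) : ℕ :=
  sInf {k | CopWinRC G k}

/-- Eccentricity of a vertex: the maximum distance to another vertex. -/
noncomputable def graphEcc {V : Type*} (G : SimpleGraph V) (v : V) : ℕ :=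
  sSup (Set.range (G.dist v))

/-- Radius of a graph: the minimum eccentricity. -/
noncomputable def graphRad {V : Type*} (G : SimpleGraph V) : ℕ :=
  sInf (Set.range (graphEcc G))

/-- If `H` is a retract of a connected graph `G` (an induced subgraph together
with a homomorphism `f : G → H` fixing `H` pointwise) and the cop wins the game
with radius of capture `k` on `G`, then he wins it on `H`. -/
theorem retract_copWinRC {V : Type*} (G : SimpleGraph V) (hG : G.Connected)
    (s : Set V) (f : G →g G.induce s) (hf : ∀ h : s, f (h : V) = h) (k : ℕ)
    (hGwin : CopWinRC G k) : CopWinRC (G.induce s) k := by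
  obtain ⟨c₀, F, hF⟩ := hGwin
  refine ⟨f c₀, fun n hist => f (F n (fun i => (hist i : V))), ?_⟩
  intro r hr
  set r' : ℕ → V := fun n => (r n : V) with hr'def
  have hrleg : ∀ i, r' (i + 1) = r' i ∨ G.Adj (r' i) (r' (i + 1)) := by
    intro i
    rcases hr i with h | h
    · exact Or.inl (congrArg Subtype.val h)
    · exact Or.inr h
  obtain ⟨hleg, n, hcap⟩ := hF r' hrleg
  have hseq : ∀ m, copSeq (f c₀) (fun n hist => f (F n (fun i => (hist i : V)))) r m
      = f (copSeq c₀ F r' m) := by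
    intro m; cases m <;> rfl
  have hdist : ∀ u v : V, (G.induce s).dist (f u) (f v) ≤ G.dist u v := by
    intro u v
    obtain ⟨p, hp⟩ := hG.exists_walk_length_eq_dist u v
    calc (G.induce s).dist (f u) (f v) ≤ (p.map f).length := dist_le _
      _ = G.dist u v := by rw [Walk.length_map, hp]
  constructor
  · intro m
    rw [hseq, hseq]
    rcases hleg m with h | h
    · exact Or.inl (congrArg f h)
    · exact Or.inr (f.map_adj h)
  · refine ⟨n, ?_⟩
    have hfr : f (r' n) = r n := hf (r n)
    rcases hcap with h | h
    · exact Or.inl (by rw [hseq, ← hfr]; exact le_trans (hdist _ _) h)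
    · exact Or.inr (by rw [hseq, ← hfr]; exact le_trans (hdist _ _) h)
end

section
/- For every connected graph G with a cycle, rc(G) ≥ ⌊g(G)/2⌋ − 1, where g(G) is the girth of G. -/
open SimpleGraph

section Aux

variable {V : Type*} [DecidableEq V] {G : SimpleGraph V}

lemma aux_dist_add_one_le_length (hconn : G.Connected) {x y u : V} (P : G.Walk x y)
    (hu : u ∈ P.support) (hne : u ≠ y) : G.dist x u + 1 ≤ P.length := by
  have h1 : G.dist x u ≤ (P.takeUntil u hu).length := SimpleGraph.dist_le _
  have h2 : 0 < G.dist u y := hconn.pos_dist_of_ne hne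
  have h3 : G.dist u y ≤ (P.dropUntil u hu).length := SimpleGraph.dist_le _
  have h4 : (P.takeUntil u hu).length + (P.dropUntil u hu).length = P.length := by
    have := congrArg Walk.length (P.take_spec hu)
    rwa [Walk.length_append] at this
  omega

lemma aux_girth_le {a : V} {w : G.Walk a a} (hw : w.IsCycle) : G.girth ≤ w.length := by
  have h1 : G.egirth ≤ (w.length : ℕ∞) :=
    iInf_le_of_le a (iInf_le_of_le w (iInf_le _ hw))
  have h2 := ENat.toNat_le_toNat h1 (by simp)
  simpa [SimpleGraph.girth] using h2

lemma aux_stage1 (hconn : G.Connected) {x a r : V} (hadj : G.Adj a r)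
    (hda : G.dist x a = G.dist x r) : G.girth ≤ 2 * G.dist x r + 1 := by
  obtain ⟨Pa, hPa⟩ := hconn.exists_walk_length_eq_dist x a
  obtain ⟨Pr, hPr⟩ := hconn.exists_walk_length_eq_dist x r
  have he1 : s(a, r) ∉ Pa.edges := by
    intro he
    have hrs : r ∈ Pa.support := Pa.snd_mem_support_of_mem_edges he
    have h := aux_dist_add_one_le_length hconn Pa hrs hadj.ne'
    omega
  have he2 : s(a, r) ∉ Pr.edges := by
    intro he
    have has : a ∈ Pr.support := Pr.fst_mem_support_of_mem_edges he
    have h := aux_dist_add_one_le_length hconn Pr has hadj.ne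
    omega
  have heQ : s(a, r) ∉ (Pa.reverse.append Pr).edges := by
    rw [Walk.edges_append]
    simp only [List.mem_append, Walk.edges_reverse, List.mem_reverse]
    rintro (h | h)
    exacts [he1 h, he2 h]
  have hcyc2 : (Walk.cons hadj.symm (Pa.reverse.append Pr).bypass).IsCycle := by
    rw [Walk.cons_isCycle_iff]
    refine ⟨Walk.bypass_isPath _, fun hmem => heQ ?_⟩
    have := Walk.edges_bypass_subset _ hmem
    rwa [Sym2.eq_swap] at this
  have hgirth := aux_girth_le hcyc2
  have hlen : (Walk.cons hadj.symm (Pa.reverse.append Pr).bypass).length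
      = (Pa.reverse.append Pr).bypass.length + 1 := Walk.length_cons _ _
  have hBle : (Pa.reverse.append Pr).bypass.length ≤ Pa.length + Pr.length := by
    have h := Walk.length_bypass_le (Pa.reverse.append Pr)
    rwa [Walk.length_append, Walk.length_reverse] at h
  omega

lemma aux_cruxGen (hconn : G.Connected) {x a r b : V} (har : G.Adj a r) (hrb : G.Adj r b)
    (hab : a ≠ b) (hda : G.dist x a ≤ G.dist x r) (hdb : G.dist x b ≤ G.dist x r) :
    G.girth ≤ 2 * G.dist x r + 1 := by
  by_cases h1 : G.dist x a = G.dist x r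
  · exact aux_stage1 hconn har h1
  by_cases h2 : G.dist x b = G.dist x r
  · exact aux_stage1 hconn hrb.symm h2
  obtain ⟨Pa, hPa⟩ := hconn.exists_walk_length_eq_dist x a
  obtain ⟨Pb, hPb⟩ := hconn.exists_walk_length_eq_dist x b
  have hras : r ∉ Pa.support := by
    intro hrs
    have hle : G.dist x r ≤ (Pa.takeUntil r hrs).length := SimpleGraph.dist_le _
    have h := Walk.length_takeUntil_le Pa hrs
    omega
  have hrbs : r ∉ Pb.support := by
    intro hrs
    have hle : G.dist x r ≤ (Pb.takeUntil r hrs).length := SimpleGraph.dist_le _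
    have h := Walk.length_takeUntil_le Pb hrs
    omega
  have heQ : s(a, r) ∉ (Pa.reverse.append (Pb.concat hrb.symm)).edges := by
    intro hmem
    rw [Walk.edges_append, Walk.edges_concat] at hmem
    simp only [List.mem_append, Walk.edges_reverse, List.mem_reverse, List.concat_eq_append,
      List.mem_singleton] at hmem
    rcases hmem with h | h | h
    · exact hras (Pa.snd_mem_support_of_mem_edges h)
    · exact hrbs (Pb.snd_mem_support_of_mem_edges h)
    · exact hab (Sym2.congr_left.mp h)
  have hcyc2 : (Walk.cons har.symm (Pa.reverse.append (Pb.concat hrb.symm)).bypass).IsCycle := by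
    rw [Walk.cons_isCycle_iff]
    refine ⟨Walk.bypass_isPath _, fun hmem => heQ ?_⟩
    have := Walk.edges_bypass_subset _ hmem
    rwa [Sym2.eq_swap] at this
  have hgirth := aux_girth_le hcyc2
  have hlen : (Walk.cons har.symm (Pa.reverse.append (Pb.concat hrb.symm)).bypass).length
      = (Pa.reverse.append (Pb.concat hrb.symm)).bypass.length + 1 := Walk.length_cons _ _
  have hBle : (Pa.reverse.append (Pb.concat hrb.symm)).bypass.length
      ≤ Pa.length + (Pb.length + 1) := by
    have h := Walk.length_bypass_le (Pa.reverse.append (Pb.concat hrb.symm))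
    rwa [Walk.length_append, Walk.length_reverse, Walk.length_concat] at h
  omega

lemma aux_getVert_eq_getElem {u v : V} (p : G.Walk u v) :
    ∀ i, (hi : i < p.support.length) → p.getVert i = p.support[i] := by
  induction p with
  | nil =>
    intro i hi
    simp only [Walk.support_nil, List.length_cons, List.length_nil] at hi
    have : i = 0 := by omega
    subst this
    simp [Walk.getVert_zero]
  | cons h q ih =>
    intro i hi
    cases i with
    | zero => simp [Walk.getVert_zero]
    | succ n =>
      rw [Walk.getVert_cons_succ]
      simp only [Walk.support_cons, List.getElem_cons_succ]
      exact ih n (by simpa [Walk.support_cons] using hi)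

lemma aux_cycle_getVert_inj {a : V} {w : G.Walk a a} (hw : w.IsCycle) {i j : ℕ}
    (hi : i < w.length) (hj : j < w.length) (hij : i ≠ j) : w.getVert i ≠ w.getVert j := by
  have h3 := hw.three_le_length
  have hlen : w.support.length = w.length + 1 := w.length_support
  have htail : w.support.tail.length = w.length := by
    rw [List.length_tail, hlen]
    omega
  have hnd : w.support.tail.Nodup := hw.support_nodup
  have hinj := List.nodup_iff_injective_getElem.mp hnd
  have key : ∀ (p q : ℕ) (_ : 1 ≤ p) (hp2 : p ≤ w.length) (_ : 1 ≤ q) (hq2 : q ≤ w.length)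
      (_ : p ≠ q), w.support[p]'(by omega) ≠ w.support[q]'(by omega) := by
    intro p q hp1 hp2 hq1 hq2 hpq hEq
    obtain ⟨p', rfl⟩ : ∃ p', p = p' + 1 := ⟨p - 1, by omega⟩
    obtain ⟨q', rfl⟩ : ∃ q', q = q' + 1 := ⟨q - 1, by omega⟩
    have e1 : w.support.tail[p']'(by omega) = w.support[p' + 1]'(by omega) := by
      have := List.get_tail w.support p' (by omega) (by omega)
      simpa only [List.get_eq_getElem] using this
    have e2 : w.support.tail[q']'(by omega) = w.support[q' + 1]'(by omega) := by
      have := List.get_tail w.support q' (by omega) (by omega)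
      simpa only [List.get_eq_getElem] using this
    have hfe : (⟨p', by omega⟩ : Fin w.support.tail.length) = ⟨q', by omega⟩ := by
      apply hinj
      simp only
      rw [e1, e2]
      exact hEq
    have hv := congrArg Fin.val hfe
    simp only at hv
    omega
  have gv : ∀ (m : ℕ) (hm : m ≤ w.length), w.getVert m = w.support[m]'(by omega) := by
    intro m hm
    exact aux_getVert_eq_getElem w m (by omega)
  have e0 : w.getVert 0 = w.support[w.length]'(by omega) := by
    have h1 : w.getVert 0 = w.getVert w.length := by
      rw [Walk.getVert_zero, Walk.getVert_length]
    rw [h1]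
    exact gv w.length le_rfl
  by_cases hi0 : i = 0
  · subst hi0
    rw [e0, gv j (by omega)]
    exact key w.length j (by omega) le_rfl (by omega) (by omega) (by omega)
  · by_cases hj0 : j = 0
    · subst hj0
      rw [e0, gv i (by omega)]
      exact key i w.length (by omega) (by omega) (by omega) le_rfl (by omega)
    · rw [gv i (by omega), gv j (by omega)]
      exact key i j (by omega) (by omega) (by omega) (by omega) hij

end Aux

open scoped Classical in
noncomputable def rStep {V : Type*} (G : SimpleGraph V) (k : ℕ) (f : ℕ → V) (c' rv : V) : V :=
  if h : ∃ v, (v = rv ∨ G.Adj rv v) ∧ (k + 2 ≤ G.dist c' v) ∧ ∃ j, v = f j then h.choose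
  else rv

lemma rStep_legal {V : Type*} (G : SimpleGraph V) (k : ℕ) (f : ℕ → V) (c' rv : V) :
    rStep G k f c' rv = rv ∨ G.Adj rv (rStep G k f c' rv) := by
  unfold rStep
  split
  · next h => exact h.choose_spec.1
  · exact Or.inl rfl

lemma rStep_spec {V : Type*} {G : SimpleGraph V} {k : ℕ} {f : ℕ → V} {c' rv : V}
    (h : ∃ v, (v = rv ∨ G.Adj rv v) ∧ (k + 2 ≤ G.dist c' v) ∧ ∃ j, v = f j) :
    (k + 2 ≤ G.dist c' (rStep G k f c' rv)) ∧ ∃ j, rStep G k f c' rv = f j := by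
  unfold rStep
  rw [dif_pos h]
  exact h.choose_spec.2

/-- History-dependent recursion. -/
noncomputable def robberAux {V : Type*} (r0 : V) (next : (n : ℕ) → (Fin (n + 1) → V) → V) :
    ℕ → V
  | 0 => r0
  | n + 1 => next n fun i => robberAux r0 next i
  termination_by n => n
  decreasing_by exact i.isLt

/-- For every connected graph `G` containing a cycle,
`rc(G) ≥ ⌊g(G)/2⌋ - 1` where `g(G)` is the girth of `G`. -/
theorem girth_div_two_sub_one_le_rcNum {V : Type*} [Fintype V]
    (G : SimpleGraph V) (hG : G.Connected) (hcyc : ¬ G.IsAcyclic) :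
    G.girth / 2 - 1 ≤ rcNum G := by
  classical
  have hne : {k | CopWinRC G k}.Nonempty := by
    have hV : Nonempty V := hG.nonempty
    obtain ⟨c₀⟩ := hV
    refine ⟨Finset.univ.sup (G.dist c₀), c₀, fun _ _ => c₀, fun r hr => ?_⟩
    have hcop : ∀ n, copSeq c₀ (fun _ _ => c₀) r n = c₀ := by
      intro n; cases n <;> rfl
    constructor
    · intro n; left; rw [hcop, hcop]
    · exact ⟨0, Or.inl (by rw [hcop]; exact Finset.le_sup (Finset.mem_univ _))⟩
  suffices key : ∀ K, CopWinRC G K → G.girth / 2 - 1 ≤ K from key _ (Nat.sInf_mem hne)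
  intro K hwin
  by_contra hlt
  push_neg at hlt
  obtain ⟨a, w, hw, hgl⟩ := (exists_girth_eq_length (G := G)).mpr hcyc
  set g := w.length with hgdef
  have hg3 : 3 ≤ g := hw.three_le_length
  have hgk : 2 * K + 4 ≤ g := by omega
  have hgpos : 0 < g := by omega
  set f : ℕ → V := fun i => w.getVert (i % g) with hf
  have hfmod : ∀ i, f (i % g) = f i := by
    intro i
    simp only [hf, Nat.mod_mod_of_dvd _ dvd_rfl]
  have hfg : ∀ i, f (i + g) = f i := by
    intro i
    simp only [hf, Nat.add_mod_right]
  have hfadj : ∀ i, G.Adj (f i) (f (i + 1)) := by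
    intro i
    have hj : i % g < g := Nat.mod_lt _ hgpos
    have h1 : (i + 1) % g = (i % g + 1) % g := by
      conv_lhs => rw [Nat.add_mod, Nat.mod_eq_of_lt (show 1 < g by omega)]
    have hadj := w.adj_getVert_succ (i := i % g) (by omega)
    by_cases hcase : i % g + 1 < g
    · have h2 : (i % g + 1) % g = i % g + 1 := Nat.mod_eq_of_lt hcase
      simp only [hf, h1, h2]
      exact hadj
    · have h2 : i % g + 1 = g := by omega
      have h3 : (i % g + 1) % g = 0 := by rw [h2, Nat.mod_self]
      simp only [hf, h1, h3, Walk.getVert_zero]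
      rw [h2] at hadj
      rw [show w.getVert g = a from w.getVert_length] at hadj
      exact hadj
  have hfne : ∀ i, f (i + (g - 1)) ≠ f (i + 1) := by
    intro i hEq
    have h1 : (i + (g - 1)) % g < g := Nat.mod_lt _ hgpos
    have h2 : (i + 1) % g < g := Nat.mod_lt _ hgpos
    have hnemod : (i + (g - 1)) % g ≠ (i + 1) % g := by
      intro hmod
      have hmodeq : Nat.ModEq g (i + 1) (i + (g - 1)) := hmod.symm
      have hdvd : g ∣ (i + (g - 1)) - (i + 1) := (Nat.modEq_iff_dvd' (by omega)).mp hmodeq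
      rw [show i + (g - 1) - (i + 1) = g - 2 by omega] at hdvd
      have := Nat.le_of_dvd (by omega) hdvd
      omega
    simp only [hf] at hEq
    exact aux_cycle_getVert_inj hw h1 h2 hnemod hEq
  have hfadj' : ∀ i, G.Adj (f (i + (g - 1))) (f i) := by
    intro i
    have h := hfadj (i + (g - 1))
    rw [show i + (g - 1) + 1 = i + g by omega, hfg] at h
    exact h
  have hcrux : ∀ (x : V) (i : ℕ), G.dist x (f (i + (g - 1))) ≤ G.dist x (f i) →
      G.dist x (f (i + 1)) ≤ G.dist x (f i) → g ≤ 2 * G.dist x (f i) + 1 := by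
    intro x i hda hdb
    have h := aux_cruxGen hG (hfadj' i) (hfadj i) (hfne i) hda hdb
    omega
  have hfar : ∀ x : V, ∃ i, K + 2 ≤ G.dist x (f i) := by
    intro x
    obtain ⟨i₀, hi₀mem, hi₀⟩ := Finset.exists_max_image (Finset.range g)
      (fun i => G.dist x (f i)) ⟨0, Finset.mem_range.mpr hgpos⟩
    have hmax : ∀ j, G.dist x (f j) ≤ G.dist x (f i₀) := by
      intro j
      have h := hi₀ (j % g) (Finset.mem_range.mpr (Nat.mod_lt _ hgpos))
      simpa only [hfmod] using h
    have h := hcrux x i₀ (hmax _) (hmax _)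
    exact ⟨i₀, by omega⟩
  have hstep : ∀ (c' : V) (i : ℕ), K + 1 ≤ G.dist c' (f i) →
      ∃ v, (v = f i ∨ G.Adj (f i) v) ∧ (K + 2 ≤ G.dist c' v) ∧ ∃ j, v = f j := by
    intro c' i hd
    by_cases h2 : K + 2 ≤ G.dist c' (f i)
    · exact ⟨f i, Or.inl rfl, h2, i, rfl⟩
    · by_cases ha : G.dist c' (f (i + (g - 1))) ≤ G.dist c' (f i)
      · by_cases hb : G.dist c' (f (i + 1)) ≤ G.dist c' (f i)
        · have h := hcrux c' i ha hb
          omega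
        · exact ⟨f (i + 1), Or.inr (hfadj i), by omega, i + 1, rfl⟩
      · exact ⟨f (i + (g - 1)), Or.inr (hfadj' i).symm, by omega, i + (g - 1), rfl⟩
  obtain ⟨c₀, F, hF⟩ := hwin
  obtain ⟨i0, hi0⟩ := hfar c₀
  set r : ℕ → V := robberAux (f i0)
    (fun n prev => rStep G K f (F n prev) (prev (Fin.last n))) with hrdef
  have hr0 : r 0 = f i0 := by rw [hrdef, robberAux]
  have hrsucc : ∀ n, r (n + 1) = rStep G K f (F n fun i => r i) (r n) := by
    intro n
    rw [hrdef, robberAux]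
    rfl
  have hlegal : ∀ i, r (i + 1) = r i ∨ G.Adj (r i) (r (i + 1)) := by
    intro i
    rw [hrsucc]
    exact rStep_legal G K f _ (r i)
  obtain ⟨hcop, hcapt⟩ := hF r hlegal
  have hcs : ∀ n, copSeq c₀ F r (n + 1) = F n fun i => r i := fun n => rfl
  have hinv : ∀ n, (K + 2 ≤ G.dist (copSeq c₀ F r n) (r n)) ∧ ∃ j, r n = f j := by
    intro n
    induction n with
    | zero => exact ⟨by rw [show copSeq c₀ F r 0 = c₀ from rfl, hr0]; exact hi0, i0, hr0⟩
    | succ n ih =>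
      obtain ⟨hdist, j, hj⟩ := ih
      have hmid : K + 1 ≤ G.dist (copSeq c₀ F r (n + 1)) (r n) := by
        rcases hcop n with h | h
        · rw [h]; omega
        · have htri := hG.dist_triangle (u := copSeq c₀ F r n) (v := copSeq c₀ F r (n + 1))
            (w := r n)
          have h1 : G.dist (copSeq c₀ F r n) (copSeq c₀ F r (n + 1)) ≤ 1 := by
            have := SimpleGraph.dist_le (Walk.cons h Walk.nil)
            simpa using this
          omega
      have hex := hstep (copSeq c₀ F r (n + 1)) j (by rwa [hj] at hmid)
      rw [← hj] at hex
      have hspec := rStep_spec (rv := r n) (c' := copSeq c₀ F r (n + 1)) hex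
      have hre : r (n + 1) = rStep G K f (copSeq c₀ F r (n + 1)) (r n) := by
        rw [hrsucc, hcs]
      rw [hre]
      exact hspec
  have hmid' : ∀ n, K + 1 ≤ G.dist (copSeq c₀ F r (n + 1)) (r n) := by
    intro n
    obtain ⟨hdist, _⟩ := hinv n
    rcases hcop n with h | h
    · rw [h]; omega
    · have htri := hG.dist_triangle (u := copSeq c₀ F r n) (v := copSeq c₀ F r (n + 1))
        (w := r n)
      have h1 : G.dist (copSeq c₀ F r n) (copSeq c₀ F r (n + 1)) ≤ 1 := by
        have := SimpleGraph.dist_le (Walk.cons h Walk.nil)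
        simpa using this
      omega
  obtain ⟨n, hn | hn⟩ := hcapt
  · have := (hinv n).1
    omega
  · have := hmid' n
    omega
end

section
/- If G is a connected generously-transitive graph, then rc(G) = rad(G) − 1. -/
open SimpleGraph

/-!
A cop at a centre wins with capture radius `rad - 1`: after seeing the robber's vertex he takes
one step towards it. Conversely, in a generously-transitive graph the robber can keep his distance
to the cop constant forever: when the cop moves from `c` to `c'` while the robber is at `r`, an
automorphism swapping `c'` and `r` sends `c` to `r` or to a neighbour of `r`, at distance
`d(c, r)` from `c'`. Starting at distance `ecc(c₀) ≥ rad` from the cop, the robber is therefore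
never within `rad - 2` of the cop, not even just after a cop move.
-/

section

variable {V : Type*}

namespace SimpleGraph

variable {W : Type*} {G : SimpleGraph V} {G' : SimpleGraph W}

theorem Hom.edist_map_le (f : G →g G') (u v : V) : G'.edist (f u) (f v) ≤ G.edist u v :=
  le_iInf fun p => (edist_le (p.map f)).trans_eq (by simp)

theorem Iso.edist_map (φ : G ≃g G') (u v : V) : G'.edist (φ u) (φ v) = G.edist u v := by
  refine le_antisymm (Hom.edist_map_le φ.toHom u v) ?_
  simpa using Hom.edist_map_le φ.symm.toHom (φ u) (φ v)

theorem Iso.dist_map (φ : G ≃g G') (u v : V) : G'.dist (φ u) (φ v) = G.dist u v := by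
  simp only [SimpleGraph.dist, φ.edist_map]

theorem exists_eq_or_adj_dist_le_dist_sub_one (G : SimpleGraph V) (u v : V) :
    ∃ w, (w = u ∨ G.Adj u w) ∧ G.dist w v ≤ G.dist u v - 1 := by
  by_cases h : G.dist u v = 0
  · exact ⟨u, .inl rfl, by omega⟩
  obtain ⟨p, hp⟩ := (Reachable.of_dist_ne_zero h).exists_walk_length_eq_dist
  cases p with
  | nil => simp at h
  | @cons _ w _ huw q => exact ⟨w, .inr huw, (dist_le q).trans (by simp at hp; omega)⟩

end SimpleGraph

theorem dist_le_graphEcc [Finite V] (G : SimpleGraph V) (u v : V) : G.dist u v ≤ graphEcc G u :=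
  le_csSup (Set.finite_range _).bddAbove ⟨v, rfl⟩

theorem graphEcc_le_of_forall_dist_le {G : SimpleGraph V} {u : V} {k : ℕ}
    (h : ∀ v, G.dist u v ≤ k) : graphEcc G u ≤ k :=
  csSup_le' (Set.forall_mem_range.mpr h)

theorem graphRad_le_graphEcc (G : SimpleGraph V) (u : V) : graphRad G ≤ graphEcc G u :=
  Nat.sInf_le ⟨u, rfl⟩

theorem exists_graphEcc_eq_graphRad [Nonempty V] (G : SimpleGraph V) :
    ∃ u, graphEcc G u = graphRad G :=
  Nat.sInf_mem (Set.range_nonempty _)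

theorem copSeq_congr (c₀ : V) (F : (n : ℕ) → (Fin (n + 1) → V) → V) {r r' : ℕ → V} {n : ℕ}
    (h : ∀ i < n, r i = r' i) : copSeq c₀ F r n = copSeq c₀ F r' n := by
  cases n with
  | zero => rfl
  | succ n => exact congrArg (F n) (funext fun i => h i i.isLt)

/-- The robber's play that answers each cop move `c → c'` by moving from `r` to `S c c' r`. -/
def respondingPlay (c₀ : V) (F : (n : ℕ) → (Fin (n + 1) → V) → V) (S : V → V → V → V)
    (r₀ : V) : ℕ → V
  | 0 => r₀
  | n + 1 =>
    -- the cop's first `n + 1` moves only see `r 0, …, r n`, so truncating keeps the recursion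
    -- well founded without changing them (`copSeq_congr`)
    let r : ℕ → V := fun i => if _h : i ≤ n then respondingPlay c₀ F S r₀ i else r₀
    S (copSeq c₀ F r n) (copSeq c₀ F r (n + 1)) (respondingPlay c₀ F S r₀ n)

theorem respondingPlay_zero (c₀ : V) (F : (n : ℕ) → (Fin (n + 1) → V) → V)
    (S : V → V → V → V) (r₀ : V) : respondingPlay c₀ F S r₀ 0 = r₀ := by
  rw [respondingPlay]

theorem respondingPlay_succ (c₀ : V) (F : (n : ℕ) → (Fin (n + 1) → V) → V)
    (S : V → V → V → V) (r₀ : V) (n : ℕ) :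
    respondingPlay c₀ F S r₀ (n + 1) =
      S (copSeq c₀ F (respondingPlay c₀ F S r₀) n)
        (copSeq c₀ F (respondingPlay c₀ F S r₀) (n + 1)) (respondingPlay c₀ F S r₀ n) := by
  rw [respondingPlay]
  congr 1 <;> refine copSeq_congr c₀ F fun i hi => ?_ <;> simp only [dif_pos (by omega : i ≤ n)]

variable {G : SimpleGraph V} {k : ℕ}

theorem copWinRC_of_forall_dist_le (c : V) (hc : ∀ v, G.dist c v ≤ k + 1) : CopWinRC G k := by
  choose step step_legal step_dist using G.exists_eq_or_adj_dist_le_dist_sub_one c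
  refine ⟨c, fun _ hist => step (hist 0), fun r _ => ⟨fun n => ?_, 0, .inr ?_⟩⟩
  · cases n with
    | zero => exact step_legal (r 0)
    | succ n => exact .inl rfl
  · exact (step_dist (r 0)).trans (by have := hc (r 0); omega)

noncomputable def mirrorMove (hgen : ∀ u v : V, ∃ φ : G ≃g G, φ u = v ∧ φ v = u)
    (c c' r : V) : V :=
  haveI := Classical.propDecidable
  if G.Adj r ((hgen c' r).choose c) then (hgen c' r).choose c else r

theorem mirrorMove_eq_or_adj (hgen : ∀ u v : V, ∃ φ : G ≃g G, φ u = v ∧ φ v = u)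
    (c c' r : V) : mirrorMove hgen c c' r = r ∨ G.Adj r (mirrorMove hgen c c' r) := by
  unfold mirrorMove
  split_ifs with h
  exacts [.inr h, .inl rfl]

theorem dist_mirrorMove (hgen : ∀ u v : V, ∃ φ : G ≃g G, φ u = v ∧ φ v = u) {c c' : V}
    (hc : c' = c ∨ G.Adj c c') (r : V) :
    G.dist c' (mirrorMove hgen c c' r) = G.dist c r := by
  unfold mirrorMove
  set φ := (hgen c' r).choose
  obtain ⟨hφc', hφr⟩ : φ c' = r ∧ φ r = c' := (hgen c' r).choose_spec
  rcases hc with rfl | hadj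
  · rw [hφc', if_neg G.irrefl]
  · have hr_adj : G.Adj r (φ c) := hφc' ▸ (φ.map_adj_iff.mpr hadj).symm
    rw [if_pos hr_adj, ← hφr, φ.dist_map, dist_comm]

theorem CopWinRC.exists_forall_dist_le (hG : G.Connected)
    (hgen : ∀ u v : V, ∃ φ : G ≃g G, φ u = v ∧ φ v = u) (hwin : CopWinRC G k) :
    ∃ c, ∀ v, G.dist c v ≤ k + 1 := by
  obtain ⟨c₀, F, hF⟩ := hwin
  refine ⟨c₀, fun v => ?_⟩
  set r := respondingPlay c₀ F (mirrorMove hgen) v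
  have r_zero : r 0 = v := respondingPlay_zero c₀ F (mirrorMove hgen) v
  have r_succ : ∀ n, r (n + 1) = mirrorMove hgen (copSeq c₀ F r n) (copSeq c₀ F r (n + 1)) (r n) :=
    respondingPlay_succ c₀ F (mirrorMove hgen) v
  obtain ⟨cop_legal, n, hcapture⟩ :=
    hF r fun i => r_succ i ▸ mirrorMove_eq_or_adj hgen _ _ _
  have dist_const : ∀ n, G.dist (copSeq c₀ F r n) (r n) = G.dist c₀ v := by
    intro n
    induction n with
    | zero => rw [r_zero]; rfl
    | succ n ih => rw [r_succ, dist_mirrorMove hgen (cop_legal n), ih]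
  have cop_step : G.dist (copSeq c₀ F r n) (copSeq c₀ F r (n + 1)) ≤ 1 := by
    rcases cop_legal n with h | h
    · simp [h]
    · simp [dist_eq_one_iff_adj.mpr h]
  have := hG.dist_triangle (u := copSeq c₀ F r n) (v := copSeq c₀ F r (n + 1)) (w := r n)
  have := dist_const n
  omega

end

theorem rcNum_of_generouslyTransitive_general {V : Type*} [Fintype V]
    (G : SimpleGraph V) (hG : G.Connected)
    (hgen : ∀ u v : V, ∃ φ : G ≃g G, φ u = v ∧ φ v = u) :
    rcNum G = graphRad G - 1 := by
  have := hG.nonempty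
  obtain ⟨c, hc⟩ := exists_graphEcc_eq_graphRad G
  have center_wins : CopWinRC G (graphRad G - 1) :=
    copWinRC_of_forall_dist_le c fun v => by have := dist_le_graphEcc G c v; omega
  refine le_antisymm (Nat.sInf_le center_wins) ?_
  have optimal_wins : CopWinRC G (rcNum G) :=
    Nat.sInf_mem (s := {k | CopWinRC G k}) ⟨_, center_wins⟩
  obtain ⟨c', hc'⟩ := optimal_wins.exists_forall_dist_le hG hgen
  have := (graphRad_le_graphEcc G c').trans (graphEcc_le_of_forall_dist_le hc')
  omega

/-- If `G` is a connected generously-transitive graph (any two vertices can be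
swapped by an automorphism), with radius at least 1, then `rc(G) = rad(G) - 1`. -/
theorem rcNum_of_generouslyTransitive {V : Type*} [Fintype V] [Nonempty V]
    (G : SimpleGraph V) (hG : G.Connected)
    (hgen : ∀ u v : V, ∃ φ : G ≃g G, φ u = v ∧ φ v = u)
    (hrad : 1 ≤ graphRad G) :
    rcNum G = graphRad G - 1 :=
  rcNum_of_generouslyTransitive_general G hG hgen
end

section
/- Every generalized Johnson graph J(n,k,i) is generously-transitive: for any two vertices A and B there exists a graph automorphism of J(n,k,i) that maps A to B and B to A. -/
open SimpleGraph

/-- The generalized Johnson graph `J(n,k,i)`: vertices are the `k`-element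
subsets of an `n`-element set, with `A ~ B` iff `|A ∩ B| = i`. -/
def genJohnson (n k i : ℕ) : SimpleGraph {A : Finset (Fin n) // A.card = k} where
  Adj A B := A ≠ B ∧ ((A : Finset (Fin n)) ∩ (B : Finset (Fin n))).card = i
  symm := by
    constructor
    rintro A B ⟨hne, hcard⟩
    exact ⟨hne.symm, by rwa [Finset.inter_comm]⟩
  loopless := by
    constructor
    rintro A ⟨hne, -⟩
    exact hne rfl

/-! A permutation of the ground set preserves sizes of intersections, so it induces an
automorphism of `J(n,k,i)`. For `|A| = |B|`, pairing off `A \ B` with `B \ A` by disjoint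
transpositions gives a permutation exchanging `A` and `B`. -/

open Equiv Finset

namespace Finset

variable {α : Type*}

theorem map_perm_mul (σ τ : Perm α) (s : Finset α) :
    s.map (σ * τ).toEmbedding = (s.map τ.toEmbedding).map σ.toEmbedding := by
  rw [map_map, Perm.mul_def, trans_toEmbedding]

variable [DecidableEq α]

theorem map_perm_eq_self {σ : Perm α} {s : Finset α} (h : ∀ x ∈ s, σ x = x) :
    s.map σ.toEmbedding = s :=
  (map_eq_image _ _).trans ((image_congr h).trans image_id)

theorem exists_perm_map_swap_of_disjoint {s t : Finset α} (hst : Disjoint s t)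
    (hcard : #s = #t) :
    ∃ σ : Perm α, s.map σ.toEmbedding = t ∧ t.map σ.toEmbedding = s ∧
      ∀ x, x ∉ s → x ∉ t → σ x = x := by
  induction s using Finset.induction_on generalizing t with
  | empty =>
    obtain rfl : t = ∅ := card_eq_zero.mp hcard.symm
    exact ⟨1, by simp, by simp, fun _ _ _ => rfl⟩
  | @insert a s ha ih =>
    obtain ⟨b, hb⟩ : t.Nonempty :=
      card_pos.mp (hcard ▸ card_pos.mpr ⟨a, mem_insert_self a s⟩)
    have hat : a ∉ t := disjoint_left.mp hst (mem_insert_self a s)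
    have hbs : b ∉ s := fun h => disjoint_left.mp hst (mem_insert_of_mem h) hb
    obtain ⟨σ, hσs, hσt, hσ⟩ := ih (t := t.erase b)
      (disjoint_of_subset_right (erase_subset b t)
        (disjoint_of_subset_left (subset_insert a s) hst))
      (by rw [card_erase_of_mem hb, ← hcard, card_insert_of_notMem ha]; rfl)
    have hσa : σ a = a := hσ a ha (fun h => hat (mem_of_mem_erase h))
    have hσb : σ b = b := hσ b hbs (notMem_erase b t)
    have hswap_t : (t.erase b).map (swap a b).toEmbedding = t.erase b :=
      map_perm_eq_self fun x hx =>
        swap_apply_of_ne_of_ne (fun h => hat (h ▸ mem_of_mem_erase hx)) (ne_of_mem_erase hx)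
    have hswap_s : s.map (swap a b).toEmbedding = s :=
      map_perm_eq_self fun x hx =>
        swap_apply_of_ne_of_ne (fun h => ha (h ▸ hx)) (fun h => hbs (h ▸ hx))
    refine ⟨swap a b * σ, ?_, ?_, ?_⟩
    · rw [map_insert, map_perm_mul, hσs, hswap_t]
      simpa [hσa] using insert_erase hb
    · rw [← insert_erase hb, map_insert, map_perm_mul, hσt, hswap_s]
      simp [hσb]
    · intro x hxs hxt
      have hxa : x ≠ a := fun h => hxs (h ▸ mem_insert_self a s)
      have hxb : x ≠ b := fun h => hxt (h ▸ hb)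
      have hσx : σ x = x :=
        hσ x (fun h => hxs (mem_insert_of_mem h)) (fun h => hxt (mem_of_mem_erase h))
      rw [Perm.mul_apply, hσx, swap_apply_of_ne_of_ne hxa hxb]

theorem exists_perm_map_swap {s t : Finset α} (hcard : #s = #t) :
    ∃ σ : Perm α, s.map σ.toEmbedding = t ∧ t.map σ.toEmbedding = s := by
  obtain ⟨σ, hσst, hσts, hσ⟩ :=
    exists_perm_map_swap_of_disjoint disjoint_sdiff_sdiff (card_sdiff_comm hcard)
  have hfix : (s ∩ t).map σ.toEmbedding = s ∩ t := map_perm_eq_self fun x hx =>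
    hσ x (fun h => (mem_sdiff.mp h).2 (mem_inter.mp hx).2)
      (fun h => (mem_sdiff.mp h).2 (mem_inter.mp hx).1)
  refine ⟨σ, ?_, ?_⟩
  · rw [← sdiff_union_inter s t, map_union, hσst, hfix, inter_comm, sdiff_union_inter]
  · rw [← sdiff_union_inter t s, map_union, hσts, inter_comm, hfix, sdiff_union_inter]

end Finset

def genJohnson.autOfPerm {n : ℕ} (σ : Perm (Fin n)) (k i : ℕ) :
    genJohnson n k i ≃g genJohnson n k i where
  toEquiv := σ.finsetCongr.subtypeEquiv fun A => by simp
  map_rel_iff' := by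
    simp [genJohnson, ← map_inter, Subtype.ext_iff]

theorem genJohnson_generouslyTransitive_general (n k i : ℕ) :
    ∀ A B : {A : Finset (Fin n) // A.card = k},
      ∃ φ : genJohnson n k i ≃g genJohnson n k i, φ A = B ∧ φ B = A := by
  intro A B
  obtain ⟨σ, hAB, hBA⟩ := exists_perm_map_swap (A.2.trans B.2.symm)
  exact ⟨genJohnson.autOfPerm σ k i, Subtype.ext hAB, Subtype.ext hBA⟩

/-- Every generalized Johnson graph `J(n,k,i)` (with `n > k > i`) is
generously-transitive: any two vertices can be swapped by an automorphism. -/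
theorem genJohnson_generouslyTransitive (n k i : ℕ) (hnk : k < n) (hki : i < k) :
    ∀ A B : {A : Finset (Fin n) // A.card = k},
      ∃ φ : genJohnson n k i ≃g genJohnson n k i, φ A = B ∧ φ B = A :=
  genJohnson_generouslyTransitive_general n k i
end

section
/- Let G be a connected graph and i ≤ rad(G) a non-negative integer. If for any two vertices x, y with d(x,y) = i there exists a neighbor y' of y with d(x,y') = i+1, then rc(G) ≥ i. -/
open SimpleGraph

/-- The robber's escaping sequence. -/
noncomputable def escSeq {V : Type*} (G : SimpleGraph V) (i : ℕ)
    (esc : ∀ x y : V, G.dist x y = i → V)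
    (F : (n : ℕ) → (Fin (n + 1) → V) → V) (r0 : V) : ℕ → V
  | 0 => r0
  | n + 1 =>
    let p : Fin (n + 1) → V := fun j => escSeq G i esc F r0 j.val
    let c := F n p
    let y := p (Fin.last n)
    if h : G.dist c y = i then esc c y h else y
decreasing_by exact j.isLt

/-- Let `G` be a connected graph and `i ≤ rad(G)`. If for any two vertices
`x`, `y` with `d(x,y) = i` there is a neighbor `y'` of `y` with
`d(x,y') = i + 1`, then `rc(G) ≥ i`. -/
theorem le_rcNum_of_escape {V : Type*} [Fintype V] (G : SimpleGraph V)
    (hG : G.Connected) (i : ℕ) (hi : i ≤ graphRad G)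
    (hesc : ∀ x y : V, G.dist x y = i →
      ∃ y' : V, G.Adj y y' ∧ G.dist x y' = i + 1) :
    i ≤ rcNum G := by
  rw [rcNum]
  simp only [graphRad, graphEcc] at hi
  have : Nonempty V := hG.nonempty
  -- the winning set is nonempty: cop stays put at any vertex
  obtain ⟨c⟩ := this
  have hne : ∃ k, CopWinRC G k := by
    refine ⟨sSup (Set.range (G.dist c)), c, fun _ _ => c, fun r _ => ?_⟩
    have hcs : ∀ n, copSeq c (fun _ _ => c) r n = c := by
      intro n; cases n <;> rfl
    constructor
    · intro n; exact Or.inl (by rw [hcs, hcs])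
    · refine ⟨0, Or.inl ?_⟩
      rw [hcs]
      exact le_csSup (Set.Finite.bddAbove (Set.finite_range _)) ⟨r 0, rfl⟩
  refine le_csInf hne ?_
  rintro k ⟨c₀, F, hF⟩
  by_contra hki
  push_neg at hki
  -- escaping choice function
  set esc : ∀ x y : V, G.dist x y = i → V := fun x y h => (hesc x y h).choose with hescdef
  have escAdj : ∀ x y (h : G.dist x y = i), G.Adj y (esc x y h) :=
    fun x y h => (hesc x y h).choose_spec.1
  have escDist : ∀ x y (h : G.dist x y = i), G.dist x (esc x y h) = i + 1 :=
    fun x y h => (hesc x y h).choose_spec.2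
  -- initial robber vertex at distance ≥ i+1 from c₀
  obtain ⟨r0, hr0⟩ : ∃ r0, i + 1 ≤ G.dist c₀ r0 := by
    have hrad : i ≤ sSup (Set.range (G.dist c₀)) :=
      le_trans hi (Nat.sInf_le ⟨c₀, rfl⟩)
    have hmem : sSup (Set.range (G.dist c₀)) ∈ Set.range (G.dist c₀) :=
      Nat.sSup_mem ⟨0, c₀, by simp⟩ (Set.Finite.bddAbove (Set.finite_range _))
    obtain ⟨y, hy⟩ := hmem
    rcases eq_or_lt_of_le (hrad.trans_eq hy.symm) with h | h
    · exact ⟨esc c₀ y h.symm, (escDist c₀ y h.symm).ge⟩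
    · exact ⟨y, h⟩
  set r : ℕ → V := escSeq G i esc F r0 with hrdef
  have hstep : ∀ n, r (n + 1) =
      if h : G.dist (F n (fun j : Fin (n + 1) => r j)) (r n) = i
      then esc _ _ h else r n := by
    intro n
    rw [hrdef, escSeq]
    simp [Fin.last]
  have hstep' : ∀ n, r (n + 1) =
      if h : G.dist (copSeq c₀ F r (n + 1)) (r n) = i
      then esc _ _ h else r n := fun n => hstep n
  have hlegal : ∀ n, r (n + 1) = r n ∨ G.Adj (r n) (r (n + 1)) := by
    intro n
    rw [hstep' n]
    split
    · rename_i h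
      exact Or.inr (escAdj _ _ h)
    · exact Or.inl rfl
  obtain ⟨hcop, n, hcap⟩ := hF r hlegal
  have hc1 : ∀ n, copSeq c₀ F r (n + 1) = F n (fun j : Fin (n + 1) => r j) := fun n => rfl
  -- distance between consecutive cop positions is ≤ 1
  have hcop1 : ∀ n, G.dist (copSeq c₀ F r n) (copSeq c₀ F r (n + 1)) ≤ 1 := by
    intro n
    rcases hcop n with h | h
    · rw [h, SimpleGraph.dist_self]
      exact Nat.zero_le 1
    · exact (dist_eq_one_iff_adj.mpr h).le
  -- main invariant
  have hinv : ∀ n, i + 1 ≤ G.dist (copSeq c₀ F r n) (r n) := by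
    intro n
    induction n with
    | zero =>
      have h0 : r 0 = r0 := by rw [hrdef, escSeq]
      have h1 : copSeq c₀ F r 0 = c₀ := rfl
      rw [h0, h1]; exact hr0
    | succ m ih =>
      have htri : G.dist (copSeq c₀ F r m) (r m) ≤
          G.dist (copSeq c₀ F r m) (copSeq c₀ F r (m + 1)) +
            G.dist (copSeq c₀ F r (m + 1)) (r m) := hG.dist_triangle
      have h1 : i ≤ G.dist (copSeq c₀ F r (m + 1)) (r m) := by
        have := hcop1 m; omega
      rw [hstep' m]
      split
      · rename_i h
        rw [escDist _ _ h]
      · rename_i h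
        omega
  have hinv2 : ∀ n, i ≤ G.dist (copSeq c₀ F r (n + 1)) (r n) := by
    intro n
    have htri : G.dist (copSeq c₀ F r n) (r n) ≤
        G.dist (copSeq c₀ F r n) (copSeq c₀ F r (n + 1)) +
          G.dist (copSeq c₀ F r (n + 1)) (r n) := hG.dist_triangle
    have := hcop1 n
    have := hinv n
    omega
  have := hinv n
  have := hinv2 n
  omega
end

section
/- If G is a harmonic even graph, then rc(G) = rad(G) − 1. -/
open SimpleGraph

/-- Diameter of a graph: the maximum eccentricity. -/
noncomputable def graphDiam {V : Type*} (G : SimpleGraph V) : ℕ :=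
  sSup (Set.range (graphEcc G))

/-- the robber strategy mirroring the cop at the antipode -/
def robSeq {V : Type*} (a : V → V) (c₀ : V)
    (F : (n : ℕ) → (Fin (n + 1) → V) → V) : ℕ → V
  | 0 => a c₀
  | n + 1 => a (F n (fun i : Fin (n + 1) => robSeq a c₀ F i))
  termination_by n => n
  decreasing_by exact i.isLt

/-- If `G` is a harmonic even graph, then `rc(G) = rad(G) - 1`.
`G` is even with antipode map `a`: for each vertex `v`, `a v` is the unique
vertex at distance `diam(G)` from `v`; and harmonic: adjacency of antipodes
implies adjacency. -/
theorem rcNum_harmonic_even {V : Type*} [Fintype V] (G : SimpleGraph V)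
    (hG : G.Connected) (a : V → V)
    (ha : ∀ v, G.dist v (a v) = graphDiam G)
    (huniq : ∀ v w, G.dist v w = graphDiam G → w = a v)
    (hharm : ∀ u v, G.Adj (a u) (a v) → G.Adj u v) :
    rcNum G = graphRad G - 1 := by
  classical
  have hne : Nonempty V := hG.nonempty
  set d := graphDiam G with hd
  -- every eccentricity equals d
  have hbddE : BddAbove (Set.range (graphEcc G)) := (Set.finite_range _).bddAbove
  have hbddD : ∀ v : V, BddAbove (Set.range (G.dist v)) :=
    fun v => (Set.finite_range _).bddAbove
  have heccle : ∀ v, graphEcc G v ≤ d :=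
    fun v => le_csSup hbddE ⟨v, rfl⟩
  have hdistle : ∀ v w, G.dist v w ≤ d :=
    fun v w => le_trans (le_csSup (hbddD v) ⟨w, rfl⟩) (heccle v)
  have hecc : ∀ v, graphEcc G v = d := by
    intro v
    refine le_antisymm (heccle v) ?_
    calc d = G.dist v (a v) := (ha v).symm
    _ ≤ graphEcc G v := le_csSup (hbddD v) ⟨a v, rfl⟩
  have hrad : graphRad G = d := by
    have : Set.range (graphEcc G) = {d} := by
      ext x
      simp only [Set.mem_range, Set.mem_singleton_iff]
      constructor
      · rintro ⟨v, rfl⟩; exact hecc v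
      · rintro rfl; exact ⟨Classical.arbitrary V, hecc _⟩
    rw [graphRad, this, csInf_singleton]
  -- involution
  have hinv : ∀ v, a (a v) = v := by
    intro v
    exact (huniq (a v) v (by rw [G.dist_comm]; exact ha v)).symm
  have hainj : Function.Injective a := by
    intro u v h
    rw [← hinv u, h, hinv]
  have hadj : ∀ u v, G.Adj u v → G.Adj (a u) (a v) := by
    intro u v h
    exact hharm (a u) (a v) (by rwa [hinv, hinv])
  -- adjacent vertex is not the antipode
  have hkey : ∀ u v, G.Adj u v → G.dist v (a u) ≤ d - 1 := by
    intro u v h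
    have h1 : G.dist v (a u) ≤ d := hdistle _ _
    rcases lt_or_eq_of_le h1 with h2 | h2
    · omega
    · exact absurd (hainj (huniq v (a u) h2 ▸ rfl : a u = a v)) (fun e => h.ne e)
  -- existence of a neighbor, when d ≥ 1
  have hnbr : ∀ v : V, 1 ≤ d → ∃ w, G.Adj v w := by
    intro v h1
    have hne' : v ≠ a v := by
      intro e
      have := ha v
      rw [← e, G.dist_self] at this
      omega
    obtain ⟨p⟩ := hG.preconnected v (a v)
    exact ⟨_, p.adj_snd (Walk.not_nil_of_ne hne')⟩
  have hmem : CopWinRC G (d - 1) := by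
    set c₀ : V := Classical.arbitrary V with hc₀
    set nb : V := if h : 1 ≤ d then (hnbr c₀ h).choose else c₀ with hnb
    set g : V → V := fun x => if G.dist c₀ x ≤ d - 1 then c₀ else nb with hg
    have hgood : ∀ x : V, (g x = c₀ ∨ G.Adj c₀ (g x)) ∧ G.dist (g x) x ≤ d - 1 := by
      intro x
      by_cases hc : G.dist c₀ x ≤ d - 1
      · have hgx : g x = c₀ := by simp [hg, hc]
        exact ⟨Or.inl hgx, by rw [hgx]; exact hc⟩
      · have hx := hdistle c₀ x
        have hd1 : 1 ≤ d := by omega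
        have h1 : G.dist c₀ x = d := by omega
        have hxa : x = a c₀ := huniq _ _ h1
        have hnbs : G.Adj c₀ nb := by
          rw [hnb, dif_pos hd1]; exact (hnbr c₀ hd1).choose_spec
        have hgx : g x = nb := by simp [hg, hc]
        refine ⟨Or.inr (by rw [hgx]; exact hnbs), ?_⟩
        rw [hgx, hxa]
        exact hkey c₀ nb hnbs
    refine ⟨c₀, fun n hist => g (hist 0), fun r hr => ?_⟩
    have hstep : ∀ n, copSeq c₀ (fun n hist => g (hist 0)) r (n + 1) = g (r 0) := by
      intro n
      simp [copSeq, Fin.val_zero]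
    constructor
    · intro n
      match n with
      | 0 =>
        rw [hstep 0]
        show g (r 0) = c₀ ∨ G.Adj c₀ (g (r 0))
        exact (hgood (r 0)).1
      | n + 1 =>
        left
        rw [hstep (n + 1), hstep n]
    · refine ⟨0, Or.inr ?_⟩
      rw [hstep 0]
      exact (hgood (r 0)).2
  -- lower bound: no k < d - 1 works
  have hlow : ∀ k, CopWinRC G k → d - 1 ≤ k := by
    intro k hk
    by_contra hlt
    push_neg at hlt
    have hd2 : k + 2 ≤ d := by omega
    obtain ⟨c₀, F, hF⟩ := hk
    set r : ℕ → V := robSeq a c₀ F with hrdef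
    set c : ℕ → V := copSeq c₀ F r with hcdef
    have hA : ∀ n, r n = a (c n) := by
      intro n
      match n with
      | 0 => simp [hrdef, hcdef, robSeq, copSeq]
      | n + 1 => simp [hrdef, hcdef, robSeq, copSeq]
    -- legality of the robber, by strong induction
    have hB : ∀ m, r (m + 1) = r m ∨ G.Adj (r m) (r (m + 1)) := by
      intro m
      induction m using Nat.strong_induction_on with
      | _ m ih =>
        set r' : ℕ → V := fun n => if n ≤ m then r n else r m with hr'
        have hr'leg : ∀ i, r' (i + 1) = r' i ∨ G.Adj (r' i) (r' (i + 1)) := by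
          intro i
          rcases lt_trichotomy i m with h | h | h
          · have h1 : i + 1 ≤ m := h
            simp only [hr', if_pos h1, if_pos (le_of_lt h)]
            exact ih i h
          · subst h
            left
            simp [hr']
          · left
            have h1 : ¬ i ≤ m := by omega
            have h2 : ¬ i + 1 ≤ m := by omega
            simp [hr', h1, h2]
        obtain ⟨hleg', _⟩ := hF r' hr'leg
        have hagree : ∀ n, n ≤ m + 1 → copSeq c₀ F r' n = c n := by
          intro n hn
          match n with
          | 0 => rfl
          | n + 1 =>
            simp only [copSeq, hcdef]
            congr 1
            ext i
            have : (i : ℕ) ≤ m := by omega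
            simp [hr', this]
        have := hleg' m
        rw [hagree (m + 1) le_rfl, hagree m (by omega)] at this
        rcases this with h | h
        · left; rw [hA (m + 1), hA m, h]
        · right; rw [hA (m + 1), hA m]; exact hadj _ _ h
    obtain ⟨hleg, n, hcap⟩ := hF r hB
    have hdn : G.dist (c n) (r n) = d := by rw [hA n, ha]
    rcases hcap with h | h
    · rw [← hcdef] at h
      omega
    · have h1 : G.dist (c n) (c (n + 1)) ≤ 1 := by
        rcases hleg n with h2 | h2
        · rw [← hcdef] at h2; rw [h2, G.dist_self]; omega
        · rw [← hcdef] at h2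
          calc G.dist (c n) (c (n+1)) ≤ (Walk.cons h2 Walk.nil).length := dist_le _
          _ = 1 := by simp
      have h2 : d ≤ G.dist (c n) (c (n + 1)) + G.dist (c (n + 1)) (r n) := by
        rw [← hdn]; exact hG.dist_triangle
      rw [← hcdef] at h
      omega
  have hne2 : {k | CopWinRC G k}.Nonempty := ⟨d - 1, hmem⟩
  rw [rcNum, hrad]
  exact le_antisymm (Nat.sInf_le hmem) (le_csInf hne2 hlow)
end

section
/- For connected graphs G and H, rc(G ⊠ H) = max{rc(G), rc(H)}, where ⊠ denotes the strong product. -/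
open SimpleGraph

/-- The strong product of two graphs: `(g₁,h₁) ~ (g₂,h₂)` iff the two pairs
differ and in each coordinate the entries are equal or adjacent. -/
def strongProd {V W : Type*} (G : SimpleGraph V) (H : SimpleGraph W) :
    SimpleGraph (V × W) where
  Adj x y := x ≠ y ∧ (x.1 = y.1 ∨ G.Adj x.1 y.1) ∧ (x.2 = y.2 ∨ H.Adj x.2 y.2)
  symm := by
    refine ⟨?_⟩
    rintro x y ⟨hne, h1, h2⟩
    exact ⟨hne.symm, h1.imp Eq.symm (fun h => G.adj_symm h), h2.imp Eq.symm (fun h => H.adj_symm h)⟩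
  loopless := by
    refine ⟨?_⟩
    rintro x ⟨hne, -, -⟩
    exact hne rfl

/-!
A strategy winning with radius `k` can be turned into one that, once it gets within distance
`k + 1` of the robber, keeps stepping along a shortest path towards him; it then stays within
distance `k` of him forever after, because each round the cop closes one unit and the robber
opens at most one. Since distances in `G ⊠ H` are maxima of the coordinate distances, a cop
playing such strategies in both coordinates at once eventually captures with radius
`max (rc G) (rc H)`. Conversely `G` and `H` are retracts of `G ⊠ H` by distance non-increasing
projections, so a winning strategy on the product projects to one on each factor.
-/

open Filter Relation

namespace SimpleGraph

variable {V W : Type*} {G : SimpleGraph V} {H : SimpleGraph W}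

lemma dist_le_one_of_reflGen {x y : V} (h : ReflGen G.Adj x y) : G.dist x y ≤ 1 := by
  cases h with
  | refl => simp
  | single h => exact dist_le h.toWalk

lemma Connected.dist_le_succ_of_reflGen (hG : G.Connected) {x y : V} (z : V)
    (h : ReflGen G.Adj x y) : G.dist z y ≤ G.dist z x + 1 :=
  hG.dist_triangle.trans (Nat.add_le_add_left (dist_le_one_of_reflGen h) _)

lemma Connected.dist_map_le_length {V' : Type*} {G' : SimpleGraph V'} (hG : G.Connected)
    {f : V' → V} (hf : ∀ x y, G'.Adj x y → ReflGen G.Adj (f x) (f y)) {x y : V'}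
    (w : G'.Walk x y) : G.dist (f x) (f y) ≤ w.length := by
  induction w with
  | nil => simp
  | @cons a b c hab w ih =>
    calc G.dist (f a) (f c) ≤ G.dist (f a) (f b) + G.dist (f b) (f c) := hG.dist_triangle
      _ ≤ w.length + 1 := by have := dist_le_one_of_reflGen (hf a b hab); omega
      _ = (w.cons hab).length := rfl

noncomputable def stepToward (G : SimpleGraph V) (c r : V) : V :=
  open Classical in
  if h : ∃ v, G.Adj c v ∧ G.dist v r < G.dist c r then h.choose else c

lemma reflGen_stepToward (c r : V) : ReflGen G.Adj c (stepToward G c r) := by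
  unfold stepToward
  split
  · next h => exact .single h.choose_spec.1
  · exact .refl

lemma stepToward_self (c : V) : stepToward G c c = c :=
  dif_neg (by simp)

lemma Connected.dist_stepToward_lt (hG : G.Connected) {c r : V} (h : c ≠ r) :
    G.dist (stepToward G c r) r < G.dist c r := by
  have hex : ∃ v, G.Adj c v ∧ G.dist v r < G.dist c r := by
    obtain ⟨p, hp⟩ := hG.exists_walk_length_eq_dist c r
    cases p with
    | nil => exact absurd rfl h
    | cons hadj p => exact ⟨_, hadj, (dist_le p).trans_lt (by simp at hp; omega)⟩
  rw [stepToward, dif_pos hex]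
  exact hex.choose_spec.2

lemma Connected.dist_stepToward_le (hG : G.Connected) {c r : V} {k : ℕ}
    (h : G.dist c r ≤ k + 1) :
    G.dist (stepToward G c r) r ≤ k := by
  obtain rfl | hne := eq_or_ne c r
  · simp [stepToward_self]
  · have := hG.dist_stepToward_lt hne
    omega

lemma reflGen_strongProd_iff {x y : V × W} :
    ReflGen (strongProd G H).Adj x y ↔ ReflGen G.Adj x.1 y.1 ∧ ReflGen H.Adj x.2 y.2 := by
  simp only [reflGen_iff, strongProd, Prod.ext_iff]
  tauto

lemma exists_walk_strongProd_length_eq_max {g g' : V} {h h' : W} (p : G.Walk g g')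
    (q : H.Walk h h') :
    ∃ w : (strongProd G H).Walk (g, h) (g', h'), w.length = max p.length q.length := by
  induction p generalizing h with
  | @nil g =>
    let ι : H →g strongProd G H :=
      ⟨fun b => (g, b), fun hb => ⟨by simp [hb.ne], .inl rfl, .inr hb⟩⟩
    exact ⟨q.map ι, by simp⟩
  | @cons a b c hab p ih =>
    cases q with
    | nil =>
      let ι : G →g strongProd G H :=
        ⟨fun a => (a, h'), fun ha => ⟨by simp [ha.ne], .inr ha, .inl rfl⟩⟩
      exact ⟨(p.cons hab).map ι, by simp⟩
    | cons hh q =>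
      obtain ⟨w, hw⟩ := ih q
      have hstep : (strongProd G H).Adj (a, _) (b, _) := ⟨by simp [hab.ne], .inr hab, .inr hh⟩
      exact ⟨w.cons hstep, by simp [hw, Nat.succ_max_succ]⟩

lemma Connected.strongProd (hG : G.Connected) (hH : H.Connected) :
    (strongProd G H).Connected := by
  have : Nonempty (V × W) := ⟨(hG.nonempty.some, hH.nonempty.some)⟩
  refine ⟨fun x y => ?_⟩
  obtain ⟨w, -⟩ := exists_walk_strongProd_length_eq_max (hG.preconnected x.1 y.1).some
    (hH.preconnected x.2 y.2).some
  exact ⟨w⟩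

lemma dist_strongProd (hG : G.Connected) (hH : H.Connected) (x y : V × W) :
    (strongProd G H).dist x y = max (G.dist x.1 y.1) (H.dist x.2 y.2) := by
  apply le_antisymm
  · obtain ⟨p, hp⟩ := hG.exists_walk_length_eq_dist x.1 y.1
    obtain ⟨q, hq⟩ := hH.exists_walk_length_eq_dist x.2 y.2
    obtain ⟨w, hw⟩ := exists_walk_strongProd_length_eq_max p q
    exact hp ▸ hq ▸ hw ▸ dist_le w
  · obtain ⟨w, hw⟩ := (hG.strongProd hH).exists_walk_length_eq_dist x y
    rw [← hw]
    exact max_le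
      (hG.dist_map_le_length (fun _ _ h => (reflGen_strongProd_iff.1 (.single h)).1) w)
      (hH.dist_map_le_length (fun _ _ h => (reflGen_strongProd_iff.1 (.single h)).2) w)

end SimpleGraph

section Game

variable {V W : Type*} {G : SimpleGraph V} {H : SimpleGraph W} {k : ℕ}

def IsPlay (G : SimpleGraph V) (r : ℕ → V) : Prop :=
  ∀ n, ReflGen G.Adj (r n) (r (n + 1))

/-- A strategy is encoded as the map from robber plays to the cop's answering plays; it is
realisable by a history-dependent strategy `copSeq c₀ F` iff the cop's position at time `n`
depends only on the robber's positions before time `n`. -/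
def IsCausal (Φ : (ℕ → V) → ℕ → V) : Prop :=
  ∀ r r' n, (∀ i < n, r i = r' i) → Φ r n = Φ r' n

def IsWinningStrategy (G : SimpleGraph V) (k : ℕ) (Φ : (ℕ → V) → ℕ → V) : Prop :=
  IsCausal Φ ∧ ∀ r, IsPlay G r → IsPlay G (Φ r) ∧
    ∃ n, G.dist (Φ r n) (r n) ≤ k ∨ G.dist (Φ r (n + 1)) (r n) ≤ k

lemma isPlay_iff {r : ℕ → V} : IsPlay G r ↔ ∀ n, r (n + 1) = r n ∨ G.Adj (r n) (r (n + 1)) :=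
  forall_congr' fun _ => reflGen_iff _ _ _

lemma isPlay_strongProd_iff {r : ℕ → V × W} :
    IsPlay (strongProd G H) r ↔ IsPlay G (Prod.fst ∘ r) ∧ IsPlay H (Prod.snd ∘ r) := by
  simp only [IsPlay, reflGen_strongProd_iff, forall_and]
  rfl

lemma isCausal_copSeq (c₀ : V) (F : (n : ℕ) → (Fin (n + 1) → V) → V) :
    IsCausal (copSeq c₀ F) := by
  rintro r r' (_ | n) h
  · rfl
  · exact congrArg (F n) (funext fun i => h i i.isLt)

lemma IsCausal.exists_copSeq_eq [Nonempty V] {Φ : (ℕ → V) → ℕ → V} (hΦ : IsCausal Φ) :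
    ∃ c₀ F, ∀ r, copSeq c₀ F r = Φ r := by
  let v : V := Classical.arbitrary V
  refine ⟨Φ (fun _ => v) 0,
    fun n hist => Φ (fun i => if h : i < n + 1 then hist ⟨i, h⟩ else v) (n + 1),
    fun r => funext fun n => ?_⟩
  cases n with
  | zero => exact hΦ _ _ 0 (by simp)
  | succ n => exact hΦ _ _ (n + 1) fun i hi => by simp [hi]

theorem copWinRC_iff : CopWinRC G k ↔ Nonempty V ∧ ∃ Φ, IsWinningStrategy G k Φ := by
  constructor
  · rintro ⟨c₀, F, hF⟩
    refine ⟨⟨c₀⟩, copSeq c₀ F, isCausal_copSeq c₀ F, fun r hr => ?_⟩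
    obtain ⟨hplay, hcap⟩ := hF r (isPlay_iff.1 hr)
    exact ⟨isPlay_iff.2 hplay, hcap⟩
  · rintro ⟨_, Φ, hΦ, hwin⟩
    obtain ⟨c₀, F, hF⟩ := hΦ.exists_copSeq_eq
    refine ⟨c₀, F, fun r hr => ?_⟩
    obtain ⟨hplay, hcap⟩ := hwin r (isPlay_iff.2 hr)
    rw [hF r]
    exact ⟨isPlay_iff.1 hplay, hcap⟩

lemma copWinRC_diam [Finite V] (hG : G.Connected) : CopWinRC G G.diam := by
  have := hG.nonempty
  exact copWinRC_iff.2 ⟨this, fun _ _ => this.some, fun _ _ _ _ => rfl,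
    fun r _ => ⟨fun _ => .refl, 0, .inl (dist_le_diam (connected_iff_ediam_ne_top.1 hG))⟩⟩

lemma copWinRC_rcNum [Finite V] (hG : G.Connected) : CopWinRC G (rcNum G) :=
  Nat.sInf_mem (s := {k | CopWinRC G k}) ⟨_, copWinRC_diam hG⟩

lemma rcNum_le (h : CopWinRC G k) : rcNum G ≤ k :=
  Nat.sInf_le h

theorem CopWinRC.of_retract {V' : Type*} {G' : SimpleGraph V'} {π : V' → V} {s : V → V'}
    (hπs : Function.LeftInverse π s)
    (hπ : ∀ x y, ReflGen G'.Adj x y → ReflGen G.Adj (π x) (π y))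
    (hs : ∀ x y, ReflGen G.Adj x y → ReflGen G'.Adj (s x) (s y))
    (hdist : ∀ x y, G.dist (π x) (π y) ≤ G'.dist x y) (h : CopWinRC G' k) : CopWinRC G k := by
  obtain ⟨⟨v'⟩, Φ, hΦ, hwin⟩ := copWinRC_iff.1 h
  refine copWinRC_iff.2 ⟨⟨π v'⟩, fun r n => π (Φ (s ∘ r) n), fun r r' n hr => ?_, fun r hr => ?_⟩
  · exact congrArg π (hΦ _ _ n fun i hi => congrArg s (hr i hi))
  · obtain ⟨hplay, n, hn⟩ := hwin (s ∘ r) fun i => hs _ _ (hr i)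
    have hπdist m : G.dist (π (Φ (s ∘ r) m)) (r n) ≤ G'.dist (Φ (s ∘ r) m) (s (r n)) := by
      simpa only [hπs (r n)] using hdist _ (s (r n))
    exact ⟨fun i => hπ _ _ (hplay i), n, hn.imp (hπdist n).trans (hπdist (n + 1)).trans⟩

theorem CopWinRC.of_strongProd_left (hG : G.Connected) (hH : H.Connected)
    (h : CopWinRC (strongProd G H) k) : CopWinRC G k :=
  h.of_retract (π := Prod.fst) (s := fun v => (v, hH.nonempty.some)) (fun _ => rfl)
    (fun _ _ hxy => (reflGen_strongProd_iff.1 hxy).1)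
    (fun _ _ hxy => reflGen_strongProd_iff.2 ⟨hxy, .refl⟩)
    (fun x y => dist_strongProd hG hH x y ▸ le_max_left _ _)

theorem CopWinRC.of_strongProd_right (hG : G.Connected) (hH : H.Connected)
    (h : CopWinRC (strongProd G H) k) : CopWinRC H k :=
  h.of_retract (π := Prod.snd) (s := fun w => (hG.nonempty.some, w)) (fun _ => rfl)
    (fun _ _ hxy => (reflGen_strongProd_iff.1 hxy).2)
    (fun _ _ hxy => reflGen_strongProd_iff.2 ⟨.refl, hxy⟩)
    (fun x y => dist_strongProd hG hH x y ▸ le_max_right _ _)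

end Game

section Hold

variable {V W : Type*} {G : SimpleGraph V} {H : SimpleGraph W} {k : ℕ}

noncomputable def holdPlay (G : SimpleGraph V) (k : ℕ) (Φ : (ℕ → V) → ℕ → V) (r : ℕ → V) :
    ℕ → V
  | 0 => Φ r 0
  | n + 1 =>
    if G.dist (holdPlay G k Φ r n) (r n) ≤ k + 1 then stepToward G (holdPlay G k Φ r n) (r n)
    else Φ r (n + 1)

variable {Φ : (ℕ → V) → ℕ → V} {r : ℕ → V} {n : ℕ}

lemma isCausal_holdPlay (hΦ : IsCausal Φ) : IsCausal (holdPlay G k Φ) := by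
  intro r r' n
  induction n with
  | zero => exact hΦ r r' 0
  | succ n ih =>
    intro h
    simp only [holdPlay, ih fun i hi => h i (by omega), h n (by omega), hΦ r r' (n + 1) h]

lemma holdPlay_succ_of_le (h : G.dist (holdPlay G k Φ r n) (r n) ≤ k + 1) :
    holdPlay G k Φ r (n + 1) = stepToward G (holdPlay G k Φ r n) (r n) :=
  if_pos h

lemma holdPlay_succ_of_not_le (h : ¬G.dist (holdPlay G k Φ r n) (r n) ≤ k + 1) :
    holdPlay G k Φ r (n + 1) = Φ r (n + 1) :=
  if_neg h

lemma dist_holdPlay_succ_le (hG : G.Connected)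
    (h : G.dist (holdPlay G k Φ r n) (r n) ≤ k + 1) :
    G.dist (holdPlay G k Φ r (n + 1)) (r n) ≤ k :=
  holdPlay_succ_of_le h ▸ hG.dist_stepToward_le h

lemma dist_holdPlay_succ_succ_le (hG : G.Connected) (hr : IsPlay G r)
    (h : G.dist (holdPlay G k Φ r n) (r n) ≤ k + 1) :
    G.dist (holdPlay G k Φ r (n + 1)) (r (n + 1)) ≤ k + 1 :=
  (hG.dist_le_succ_of_reflGen _ (hr n)).trans (Nat.add_le_add_right (dist_holdPlay_succ_le hG h) 1)

lemma holdPlay_eq_of_not_le (hG : G.Connected) (hr : IsPlay G r)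
    (h : ¬G.dist (holdPlay G k Φ r n) (r n) ≤ k + 1) : holdPlay G k Φ r n = Φ r n := by
  cases n with
  | zero => rfl
  | succ n => exact holdPlay_succ_of_not_le fun hn => h (dist_holdPlay_succ_succ_le hG hr hn)

lemma isPlay_holdPlay (hG : G.Connected) (hr : IsPlay G r) (hΦ : IsPlay G (Φ r)) :
    IsPlay G (holdPlay G k Φ r) := by
  intro n
  by_cases h : G.dist (holdPlay G k Φ r n) (r n) ≤ k + 1
  · rw [holdPlay_succ_of_le h]
    exact reflGen_stepToward _ _
  · rw [holdPlay_succ_of_not_le h, holdPlay_eq_of_not_le hG hr h]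
    exact hΦ n

lemma eventually_dist_holdPlay_le (hG : G.Connected) (hr : IsPlay G r)
    (hcap : ∃ n, G.dist (Φ r n) (r n) ≤ k ∨ G.dist (Φ r (n + 1)) (r n) ≤ k) :
    ∀ᶠ n in atTop, G.dist (holdPlay G k Φ r (n + 1)) (r n) ≤ k := by
  have hclose : ∃ N, G.dist (holdPlay G k Φ r N) (r N) ≤ k + 1 := by
    by_contra! hfar
    have hfollow n : holdPlay G k Φ r n = Φ r n := holdPlay_eq_of_not_le hG hr (hfar n).not_ge
    obtain ⟨n, hn | hn⟩ := hcap
    · have := hfar n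
      rw [hfollow] at this
      omega
    · have := hfar (n + 1)
      have := hG.dist_le_succ_of_reflGen (Φ r (n + 1)) (hr n)
      rw [hfollow] at *
      omega
  obtain ⟨N, hN⟩ := hclose
  have hstay : ∀ n ≥ N, G.dist (holdPlay G k Φ r n) (r n) ≤ k + 1 :=
    fun n hn => Nat.le_induction hN (fun n _ ih => dist_holdPlay_succ_succ_le hG hr ih) n hn
  exact eventually_atTop.2 ⟨N, fun n hn => dist_holdPlay_succ_le hG (hstay n hn)⟩

theorem CopWinRC.strongProd {k₁ k₂ : ℕ} (hG : G.Connected) (hH : H.Connected)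
    (h₁ : CopWinRC G k₁) (h₂ : CopWinRC H k₂) : CopWinRC (strongProd G H) (max k₁ k₂) := by
  obtain ⟨⟨a⟩, Φ₁, hΦ₁, hwin₁⟩ := copWinRC_iff.1 h₁
  obtain ⟨⟨b⟩, Φ₂, hΦ₂, hwin₂⟩ := copWinRC_iff.1 h₂
  refine copWinRC_iff.2 ⟨⟨(a, b)⟩,
    fun r n => (holdPlay G k₁ Φ₁ (Prod.fst ∘ r) n, holdPlay H k₂ Φ₂ (Prod.snd ∘ r) n),
    fun r r' n hr => ?_, fun r hr => ?_⟩
  · exact Prod.ext (isCausal_holdPlay hΦ₁ _ _ n fun i hi => congrArg Prod.fst (hr i hi))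
      (isCausal_holdPlay hΦ₂ _ _ n fun i hi => congrArg Prod.snd (hr i hi))
  · obtain ⟨hr₁, hr₂⟩ := isPlay_strongProd_iff.1 hr
    obtain ⟨hplay₁, hcap₁⟩ := hwin₁ _ hr₁
    obtain ⟨hplay₂, hcap₂⟩ := hwin₂ _ hr₂
    refine ⟨isPlay_strongProd_iff.2
      ⟨isPlay_holdPlay hG hr₁ hplay₁, isPlay_holdPlay hH hr₂ hplay₂⟩, ?_⟩
    obtain ⟨n, hn₁, hn₂⟩ := ((eventually_dist_holdPlay_le hG hr₁ hcap₁).and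
      (eventually_dist_holdPlay_le hH hr₂ hcap₂)).exists
    exact ⟨n, .inr ((dist_strongProd hG hH _ _).trans_le (max_le_max hn₁ hn₂))⟩

end Hold

/-- For connected graphs `G` and `H`, `rc(G ⊠ H) = max (rc G) (rc H)`. -/
theorem rcNum_strongProd {V W : Type*} [Fintype V] [Fintype W]
    (G : SimpleGraph V) (H : SimpleGraph W)
    (hG : G.Connected) (hH : H.Connected) :
    rcNum (strongProd G H) = max (rcNum G) (rcNum H) := by
  apply le_antisymm
  · exact rcNum_le ((copWinRC_rcNum hG).strongProd hG hH (copWinRC_rcNum hH))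
  · have h := copWinRC_rcNum (hG.strongProd hH)
    exact max_le (rcNum_le (h.of_strongProd_left hG hH)) (rcNum_le (h.of_strongProd_right hG hH))
end
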